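/- arXiv:2008.01863 — 3 statements merged into one kernel-verified Lean document; each statement's English description precedes it below -/
import Mathlib

section
/- Let G be a bridgeless connected subcubic graph, V₀ ⊆ V(G), and let N be the set of vertices outside V₀ having a neighbour in V₀. Let (N, E*) be a graph on vertex set N each of whose connected components is either a single vertex or has at least three vertices, and assume some pair in E* is not an edge of G. Then there exists e ∈ E* with e ∉ E(G) such that the graph obtained from G by deleting V₀ and adding the edge e is subcubic and has no connected component that is 3-regular. -/
open SimpleGraph Finset
open scoped Classical

/-- `M` is a matching of `G`: a set of edges of `G` that are pairwise non-adjacent. -/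
def IsMatchingSet {V : Type} (G : SimpleGraph V) (M : Finset (Sym2 V)) : Prop :=
  (∀ e ∈ M, e ∈ G.edgeSet) ∧
    ∀ e ∈ M, ∀ f ∈ M, e ≠ f → ∀ v : V, v ∈ e → v ∉ f

/-- `M` is a maximal matching of `G`: a matching that cannot be extended. -/
def IsMaximalMatching {V : Type} (G : SimpleGraph V) (M : Finset (Sym2 V)) : Prop :=
  IsMatchingSet G M ∧ ∀ e ∈ G.edgeSet, e ∉ M → ¬ IsMatchingSet G (insert e M)

/-- The graph obtained from `G` by deleting the vertex set `V₀` (keeping only edges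
with both endpoints outside `V₀`) and adding the edge `ab`. -/
def reducedGraph {V : Type} (G : SimpleGraph V) (V₀ : Set V) (a b : V) : SimpleGraph V :=
  SimpleGraph.fromEdgeSet ({e | e ∈ G.edgeSet ∧ ∀ x ∈ e, x ∉ V₀} ∪ {s(a, b)})

/-!
In `G - V₀ + ab` the vertices of `V₀` are isolated, a vertex of `N` other than `a`, `b` has lost
an edge into `V₀` and so has degree at most `2`, and `a`, `b` have degree at most `3`. Since `G` is
connected, every vertex outside `V₀` reaches `N` inside `G - V₀`; so a cubic component must contain
`a` and `b` and no other vertex of `N`. In that case `a` has a single neighbour `y` in `V₀`, and a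
walk from `a` to `y` avoiding the non-bridge `ay` first leaves `G - V₀` through `b`: so `a` and `b`
are joined in `G - V₀`. The `E*`-component of `a` has a third vertex, hence an `E*`-edge `dx` with
`d ∈ {a, b}` and `x ∉ {a, b}`. Since `x` is not joined to `a` in `G - V₀`, `dx` is not an edge of
`G`, and in `G - V₀ + dx` the other vertex of `{a, b}` has degree at most `2` and lies in the
component of `d`.
-/

namespace SimpleGraph

variable {V : Type}

/-- `G - V₀` as a graph on all of `V`: the vertices of `V₀` stay, as isolated vertices. -/
def deleteVerts (G : SimpleGraph V) (V₀ : Set V) : SimpleGraph V where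
  Adj u v := G.Adj u v ∧ u ∉ V₀ ∧ v ∉ V₀
  symm := ⟨fun _ _ h => ⟨h.1.symm, h.2.2, h.2.1⟩⟩
  loopless := ⟨fun _ h => h.1.ne rfl⟩

def externalNeighborSet (G : SimpleGraph V) (V₀ : Set V) : Set V :=
  {x | x ∉ V₀ ∧ ∃ y ∈ V₀, G.Adj x y}

variable {G G' : SimpleGraph V} {V₀ : Set V}

@[simp]
lemma deleteVerts_adj {u v : V} : (G.deleteVerts V₀).Adj u v ↔ G.Adj u v ∧ u ∉ V₀ ∧ v ∉ V₀ :=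
  Iff.rfl

lemma deleteVerts_mono (h : G ≤ G') : G.deleteVerts V₀ ≤ G'.deleteVerts V₀ :=
  fun _ _ huv => ⟨h huv.1, huv.2⟩

lemma deleteVerts_le : G.deleteVerts V₀ ≤ G :=
  fun _ _ huv => huv.1

lemma degree_sup_edge_le (a b v : V) [Fintype (G.neighborSet v)]
    [Fintype ((G ⊔ edge a b).neighborSet v)] : (G ⊔ edge a b).degree v ≤ G.degree v + 1 := by
  simp only [← card_neighborFinset_eq_degree]
  calc _ ≤ #(insert (if v = a then b else a) (G.neighborFinset v)) :=
        card_le_card fun w hw => by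
          simp only [mem_neighborFinset, sup_adj, edge_adj, mem_insert] at hw ⊢
          grind
    _ ≤ _ := card_insert_le _ _

lemma degree_sup_edge_of_ne {a b v : V} (hva : v ≠ a) (hvb : v ≠ b) [Fintype (G.neighborSet v)]
    [Fintype ((G ⊔ edge a b).neighborSet v)] : (G ⊔ edge a b).degree v = G.degree v := by
  simp only [← card_neighborFinset_eq_degree]
  congr 1
  ext w
  simp only [mem_neighborFinset, sup_adj, edge_adj]
  grind

lemma Walk.exists_mem_externalNeighborSet_reachable {u t : V} (p : G.Walk u t) (hu : u ∉ V₀)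
    (ht : t ∈ V₀) : ∃ x ∈ G.externalNeighborSet V₀, (G.deleteVerts V₀).Reachable u x := by
  induction p with
  | nil => exact absurd ht hu
  | @cons u w t huw p ih =>
    by_cases hw : w ∈ V₀
    · exact ⟨u, ⟨hu, w, hw, huw⟩, .refl u⟩
    · obtain ⟨x, hx, hwx⟩ := ih hw ht
      exact ⟨x, hx, (Adj.reachable (G := G.deleteVerts V₀) ⟨huw, hu, hw⟩).trans hwx⟩

lemma exists_ne_reachable_deleteVerts_of_not_isBridge {a y : V} (hbr : ¬ G.IsBridge s(a, y))
    (ha : a ∉ V₀) (hy : y ∈ V₀) (huniq : ∀ z ∈ V₀, G.Adj a z → z = y) :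
    ∃ x ∈ G.externalNeighborSet V₀, x ≠ a ∧ (G.deleteVerts V₀).Reachable a x := by
  rw [isBridge_iff, not_not] at hbr
  obtain ⟨x, ⟨hx, z, hz, hxz⟩, hax⟩ := hbr.some.exists_mem_externalNeighborSet_reachable ha hy
  rw [deleteEdges_adj] at hxz
  refine ⟨x, ⟨hx, z, hz, hxz.1⟩, ?_, hax.mono (deleteVerts_mono (deleteEdges_le _))⟩
  rintro rfl
  exact hxz.2 (huniq z hz hxz.1 ▸ rfl)

lemma exists_adj_notMem_of_three_le_ncard {H : SimpleGraph V} {a : V} (b : V)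
    (h : 3 ≤ {w | H.Reachable a w}.ncard) :
    ∃ d ∈ ({a, b} : Set V), ∃ x ∉ ({a, b} : Set V), H.Adj d x := by
  obtain ⟨c, hac, hc⟩ : ∃ c, H.Reachable a c ∧ c ∉ ({a, b} : Set V) := by
    by_contra! hsub
    have := Set.ncard_le_ncard (s := {w | H.Reachable a w}) hsub
    have := Set.ncard_insert_le a {b}
    rw [Set.ncard_singleton] at this
    omega
  obtain ⟨d, -, hd, hx⟩ := hac.some.exists_boundary_dart _ (Set.mem_insert a {b}) hc
  exact ⟨d.fst, hd, d.snd, hx, d.adj⟩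

lemma reducedGraph_eq_deleteVerts_sup_edge (a b : V) :
    reducedGraph G V₀ a b = G.deleteVerts V₀ ⊔ edge a b := by
  ext u v
  simp only [reducedGraph, fromEdgeSet_adj, sup_adj, edge_adj, deleteVerts_adj, Set.mem_union,
    Set.mem_ofPred_eq, mem_edgeSet, Sym2.forall_mem_pair, Set.mem_singleton_iff, Sym2.eq_iff]
  grind [Adj.ne]

lemma deleteVerts_le_reducedGraph (a b : V) : G.deleteVerts V₀ ≤ reducedGraph G V₀ a b :=
  reducedGraph_eq_deleteVerts_sup_edge a b ▸ le_sup_left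

lemma reducedGraph_reachable (a b : V) : (reducedGraph G V₀ a b).Reachable a b := by
  by_cases hab : a = b
  · exact hab ▸ .refl a
  · rw [reducedGraph_eq_deleteVerts_sup_edge]
    exact Adj.reachable (Or.inr ((edge_adj a b a b).2 ⟨Or.inl ⟨rfl, rfl⟩, hab⟩))

section Finite

variable [Fintype V]

lemma degree_deleteVerts_add_card_le {v : V} {S : Finset V} (hS : ∀ y ∈ S, y ∈ V₀ ∧ G.Adj v y) :
    (G.deleteVerts V₀).degree v + #S ≤ G.degree v := by
  simp only [← card_neighborFinset_eq_degree]
  rw [← card_union_of_disjoint]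
  · refine card_le_card (union_subset (fun w hw => ?_) fun y hy => ?_) <;>
      rw [mem_neighborFinset] at *
    · exact hw.1
    · exact (hS y hy).2
  · refine Finset.disjoint_left.2 fun w hw hwS => ?_
    rw [mem_neighborFinset] at hw
    exact hw.2.2 (hS w hwS).1

lemma degree_deleteVerts_of_mem {v : V} (hv : v ∈ V₀) : (G.deleteVerts V₀).degree v = 0 := by
  rw [← card_neighborFinset_eq_degree, card_eq_zero, eq_empty_iff_forall_notMem]
  exact fun w hw => ((mem_neighborFinset _ _ _).1 hw).2.1 hv

lemma degree_reducedGraph_le (a b v : V) :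
    (reducedGraph G V₀ a b).degree v ≤ (G.deleteVerts V₀).degree v + 1 := by
  rw [reducedGraph_eq_deleteVerts_sup_edge]
  convert degree_sup_edge_le a b v

lemma degree_reducedGraph_of_ne {a b v : V} (hva : v ≠ a) (hvb : v ≠ b) :
    (reducedGraph G V₀ a b).degree v = (G.deleteVerts V₀).degree v := by
  rw [reducedGraph_eq_deleteVerts_sup_edge]
  convert degree_sup_edge_of_ne hva hvb

lemma degree_reducedGraph_le_two {a b x : V} (hsub : G.degree x ≤ 3)
    (hx : x ∈ G.externalNeighborSet V₀) (hxa : x ≠ a) (hxb : x ≠ b) :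
    (reducedGraph G V₀ a b).degree x ≤ 2 := by
  obtain ⟨-, y, hy, hxy⟩ := hx
  have := degree_deleteVerts_add_card_le (S := {y}) (by simpa using ⟨hy, hxy⟩)
  rw [card_singleton] at this
  rw [degree_reducedGraph_of_ne hxa hxb]
  omega

lemma degree_reducedGraph_le_three (hsub : ∀ v, G.degree v ≤ 3) {a b : V}
    (ha : a ∈ G.externalNeighborSet V₀) (hb : b ∈ G.externalNeighborSet V₀) (v : V) :
    (reducedGraph G V₀ a b).degree v ≤ 3 := by
  by_cases hv : v = a ∨ v = b
  · obtain ⟨-, y, hy, hvy⟩ : v ∈ G.externalNeighborSet V₀ := by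
      rcases hv with rfl | rfl <;> assumption
    have := degree_deleteVerts_add_card_le (S := {y}) (by simpa using ⟨hy, hvy⟩)
    rw [card_singleton] at this
    have := degree_reducedGraph_le (G := G) (V₀ := V₀) a b v
    have := hsub v
    omega
  · push Not at hv
    rw [degree_reducedGraph_of_ne hv.1 hv.2]
    exact (degree_le_of_le deleteVerts_le).trans (hsub v)

def ReachesNonCubic (R : SimpleGraph V) (v : V) : Prop :=
  ∃ w, R.Reachable v w ∧ R.degree w ≠ 3

lemma ReachesNonCubic.of_reachable {R : SimpleGraph V} {v w : V} (h : R.Reachable v w)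
    (hw : R.ReachesNonCubic w) : R.ReachesNonCubic v :=
  let ⟨z, hwz, hz⟩ := hw
  ⟨z, h.trans hwz, hz⟩

lemma reachesNonCubic_reducedGraph_of_reachable (hsub : ∀ v, G.degree v ≤ 3) {a b o v : V}
    (ho : o ∈ G.externalNeighborSet V₀) (hoa : o ≠ a) (hob : o ≠ b)
    (h : (G.deleteVerts V₀).Reachable v o) : (reducedGraph G V₀ a b).ReachesNonCubic v :=
  ⟨o, h.mono (deleteVerts_le_reducedGraph a b), by
    have := degree_reducedGraph_le_two (hsub o) ho hoa hob; omega⟩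

theorem reachesNonCubic_reducedGraph (hsub : ∀ v, G.degree v ≤ 3) (hconn : G.Connected) {a b : V}
    (ha : a ∈ G.externalNeighborSet V₀) (hb : b ∈ G.externalNeighborSet V₀)
    (hz : (reducedGraph G V₀ a b).ReachesNonCubic a) (v : V) :
    (reducedGraph G V₀ a b).ReachesNonCubic v := by
  by_cases hv : v ∈ V₀
  · refine ⟨v, .refl v, ?_⟩
    rw [degree_reducedGraph_of_ne (ne_of_mem_of_not_mem hv ha.1)
      (ne_of_mem_of_not_mem hv hb.1), degree_deleteVerts_of_mem hv]
    omega
  obtain ⟨-, y, hy, -⟩ := ha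
  obtain ⟨x, hx, hvx⟩ := (hconn.preconnected v y).some.exists_mem_externalNeighborSet_reachable hv hy
  have hvx' := hvx.mono (deleteVerts_le_reducedGraph a b)
  by_cases hxa : x = a
  · exact hz.of_reachable (hxa ▸ hvx')
  by_cases hxb : x = b
  · subst hxb
    exact hz.of_reachable (hvx'.trans (reducedGraph_reachable a x).symm)
  exact reachesNonCubic_reducedGraph_of_reachable hsub hx hxa hxb hvx

lemma eq_of_degree_reducedGraph_eq_three {a b y z : V} (hsub : G.degree a ≤ 3)
    (h : (reducedGraph G V₀ a b).degree a = 3) (hy : y ∈ V₀) (hz : z ∈ V₀) (hay : G.Adj a y)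
    (haz : G.Adj a z) : y = z := by
  by_contra hyz
  have := degree_deleteVerts_add_card_le (G := G) (V₀ := V₀) (v := a) (S := {y, z})
    (by simp [hy, hz, hay, haz])
  rw [card_pair hyz] at this
  have := degree_reducedGraph_le (G := G) (V₀ := V₀) a b a
  omega

lemma eq_or_eq_of_not_reachesNonCubic (hsub : ∀ v, G.degree v ≤ 3) {a b x : V}
    (hz : ¬ (reducedGraph G V₀ a b).ReachesNonCubic a) (hx : x ∈ G.externalNeighborSet V₀)
    (hax : (G.deleteVerts V₀).Reachable a x) : x = a ∨ x = b := by
  by_contra! hxab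
  exact hz (reachesNonCubic_reducedGraph_of_reachable hsub hx hxab.1 hxab.2 hax)

lemma reachable_deleteVerts_of_not_reachesNonCubic (hsub : ∀ v, G.degree v ≤ 3)
    (hbridgeless : ∀ e, ¬ G.IsBridge e) {a b : V} (ha : a ∈ G.externalNeighborSet V₀)
    (hz : ¬ (reducedGraph G V₀ a b).ReachesNonCubic a) : (G.deleteVerts V₀).Reachable a b := by
  obtain ⟨haV, y, hy, hay⟩ := ha
  have hdeg : (reducedGraph G V₀ a b).degree a = 3 := not_not.1 fun h => hz ⟨a, .refl a, h⟩
  obtain ⟨x, hx, hxa, hax⟩ := exists_ne_reachable_deleteVerts_of_not_isBridge (hbridgeless _)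
    haV hy fun z hz haz => (eq_of_degree_reducedGraph_eq_three (hsub a) hdeg hy hz hay haz).symm
  exact (eq_or_eq_of_not_reachesNonCubic hsub hz hx hax).resolve_left hxa ▸ hax

theorem exists_adj_not_adj_reachesNonCubic (hsub : ∀ v, G.degree v ≤ 3)
    (hbridgeless : ∀ e, ¬ G.IsBridge e) {H : SimpleGraph V}
    (hHN : ∀ a b, H.Adj a b → a ∈ G.externalNeighborSet V₀ ∧ b ∈ G.externalNeighborSet V₀)
    {a b : V} (hcomp : {w | H.Reachable a w} = {a} ∨ 3 ≤ ({w | H.Reachable a w} : Set V).ncard)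
    (hab : H.Adj a b) (hnab : ¬ G.Adj a b) :
    ∃ p q, H.Adj p q ∧ ¬ G.Adj p q ∧ (reducedGraph G V₀ p q).ReachesNonCubic p := by
  by_cases hz : (reducedGraph G V₀ a b).ReachesNonCubic a
  · exact ⟨a, b, hab, hnab, hz⟩
  obtain ⟨ha, hb⟩ := hHN a b hab
  have hDab := reachable_deleteVerts_of_not_reachesNonCubic hsub hbridgeless ha hz
  have h3 := hcomp.resolve_left fun h => hab.ne (h.subset hab.reachable).symm
  obtain ⟨d, hd, x, hx, hdx⟩ := exists_adj_notMem_of_three_le_ncard b h3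
  obtain ⟨hd', hx'⟩ := hHN d x hdx
  have had : (G.deleteVerts V₀).Reachable a d := by
    rcases hd with rfl | rfl
    exacts [.refl _, hDab]
  have hnG : ¬ G.Adj d x := fun hG => hx <| eq_or_eq_of_not_reachesNonCubic hsub hz hx' <|
    had.trans (Adj.reachable (G := G.deleteVerts V₀) ⟨hG, hd'.1, hx'.1⟩)
  refine ⟨d, x, hdx, hnG, ?_⟩
  simp only [Set.mem_insert_iff, Set.mem_singleton_iff, not_or] at hd hx
  rcases hd with rfl | rfl
  · exact reachesNonCubic_reducedGraph_of_reachable hsub hb hab.ne.symm (Ne.symm hx.2) hDab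
  · exact reachesNonCubic_reducedGraph_of_reachable hsub ha hab.ne (Ne.symm hx.1) hDab.symm

end Finite

end SimpleGraph

/-- Technical lemma: in a bridgeless connected subcubic graph one can delete `V₀` and
add back a non-edge of `E*` so that no component of the result is cubic. -/
theorem stmt_6 {V : Type} [Fintype V] (G : SimpleGraph V)
    (hsub : ∀ v, G.degree v ≤ 3) (hconn : G.Connected)
    (hbridgeless : ∀ e : Sym2 V, ¬ G.IsBridge e)
    (V₀ : Set V) (N : Set V)
    (hN : N = {x | x ∉ V₀ ∧ ∃ y ∈ V₀, G.Adj x y})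
    (H : SimpleGraph V)
    (hHN : ∀ a b, H.Adj a b → a ∈ N ∧ b ∈ N)
    (hcomp : ∀ v ∈ N, {w | H.Reachable v w} = {v} ∨ 3 ≤ ({w | H.Reachable v w} : Set V).ncard)
    (hex : ∃ e ∈ H.edgeSet, e ∉ G.edgeSet) :
    ∃ a b : V, H.Adj a b ∧ ¬ G.Adj a b ∧
      (∀ v, (reducedGraph G V₀ a b).degree v ≤ 3) ∧
      (∀ v, ∃ w, (reducedGraph G V₀ a b).Reachable v w ∧
        (reducedGraph G V₀ a b).degree w ≠ 3) := by
  subst hN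
  obtain ⟨⟨a, b⟩, hab, hnab⟩ := hex
  obtain ⟨p, q, hpq, hnpq, hz⟩ :=
    exists_adj_not_adj_reachesNonCubic hsub hbridgeless hHN (hcomp a (hHN a b hab).1) hab hnab
  obtain ⟨hp, hq⟩ := hHN p q hpq
  exact ⟨p, q, hpq, hnpq, degree_reducedGraph_le_three hsub hp hq,
    reachesNonCubic_reducedGraph hsub hconn hp hq hz⟩
end

section
/- Every cubic graph on n vertices satisfies γ(G) ≥ 3n/10, where γ(G) is the minimum size of a maximal matching. -/
open SimpleGraph Finset
open scoped Classical

/-- Every cubic graph on `n` vertices satisfies `γ(G) ≥ 3n/10`: every maximal matching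
has size at least `3n/10`. -/
theorem stmt_7 {V : Type} [Fintype V] (G : SimpleGraph V)
    (hcubic : ∀ v, G.degree v = 3)
    (M : Finset (Sym2 V)) (hM : IsMaximalMatching G M) :
    3 * (Fintype.card V : ℚ) / 10 ≤ (M.card : ℚ) := by
  classical
  set C : Finset V := Finset.univ.filter (fun v => ∃ e ∈ M, v ∈ e) with hC
  set U : Finset V := Cᶜ with hU
  have hmemC : ∀ v : V, v ∈ C ↔ ∃ e ∈ M, v ∈ e := by
    intro v; simp [hC]
  have hmemU : ∀ v : V, v ∈ U ↔ ¬ ∃ e ∈ M, v ∈ e := by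
    intro v; simp [hU, hC]
  -- independence of U
  have hindep : ∀ u ∈ U, ∀ w ∈ U, ¬ G.Adj u w := by
    intro u hu w hw hadj
    have he : s(u, w) ∈ G.edgeSet := hadj
    have henM : s(u, w) ∉ M := by
      intro h
      exact (hmemU u).1 hu ⟨s(u, w), h, by simp⟩
    refine hM.2 _ he henM ⟨?_, ?_⟩
    · intro f hf
      rcases Finset.mem_insert.1 hf with h | h
      · exact h ▸ he
      · exact hM.1.1 f h
    · intro a ha b hb hab v hva hvb
      rcases Finset.mem_insert.1 ha with ha' | ha' <;>
        rcases Finset.mem_insert.1 hb with hb' | hb'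
      · exact hab (ha'.trans hb'.symm)
      · -- a = s(u,w), b ∈ M : v ∈ a means v = u or w, uncovered
        subst ha'
        rcases Sym2.mem_iff.1 hva with rfl | rfl
        · exact (hmemU v).1 hu ⟨b, hb', hvb⟩
        · exact (hmemU v).1 hw ⟨b, hb', hvb⟩
      · subst hb'
        rcases Sym2.mem_iff.1 hvb with rfl | rfl
        · exact (hmemU v).1 hu ⟨a, ha', hva⟩
        · exact (hmemU v).1 hw ⟨a, ha', hva⟩
      · exact hM.1.2 a ha' b hb' hab v hva hvb
  -- each uncovered vertex has all 3 neighbors in C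
  have h1 : ∀ u ∈ U, (C.filter (fun v => G.Adj u v)).card = 3 := by
    intro u hu
    have : C.filter (fun v => G.Adj u v) = G.neighborFinset u := by
      ext v
      simp only [Finset.mem_filter, mem_neighborFinset]
      constructor
      · exact fun h => h.2
      · intro h
        refine ⟨?_, h⟩
        by_contra hv
        have hvU : v ∈ U := by
          rw [hmemU]; rw [hmemC] at hv; exact hv
        exact hindep u hu v hvU h
    rw [this, card_neighborFinset_eq_degree, hcubic]
  -- each covered vertex has at most 2 uncovered neighbors
  have h2 : ∀ v ∈ C, (U.filter (fun u => G.Adj u v)).card ≤ 2 := by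
    intro v hv
    obtain ⟨e, heM, hve⟩ := (hmemC v).1 hv
    have he : e ∈ G.edgeSet := hM.1.1 e heM
    induction e using Sym2.ind with
    | _ a b =>
      have hab : G.Adj a b := he
      -- the partner w of v
      obtain ⟨w, hwadj, hwC⟩ : ∃ w, G.Adj v w ∧ w ∈ C := by
        rcases Sym2.mem_iff.1 hve with rfl | rfl
        · exact ⟨b, hab, (hmemC b).2 ⟨s(v, b), heM, by simp⟩⟩
        · exact ⟨a, hab.symm, (hmemC a).2 ⟨s(a, v), heM, by simp⟩⟩
      have hsub : U.filter (fun u => G.Adj u v) ⊆ (G.neighborFinset v).erase w := by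
        intro u hu
        rw [Finset.mem_filter] at hu
        rw [Finset.mem_erase, mem_neighborFinset]
        refine ⟨?_, hu.2.symm⟩
        rintro rfl
        exact (hmemU u).1 hu.1 ((hmemC u).1 hwC)
      calc (U.filter (fun u => G.Adj u v)).card
          ≤ ((G.neighborFinset v).erase w).card := Finset.card_le_card hsub
        _ = (G.neighborFinset v).card - 1 :=
            Finset.card_erase_of_mem (by rwa [mem_neighborFinset])
        _ ≤ 2 := by rw [card_neighborFinset_eq_degree, hcubic]
  -- double counting
  have hcount : 3 * U.card ≤ 2 * C.card := by
    calc 3 * U.card = ∑ u ∈ U, 3 := by rw [Finset.sum_const, smul_eq_mul, mul_comm]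
      _ = ∑ u ∈ U, (C.filter (fun v => G.Adj u v)).card := by
          exact (Finset.sum_congr rfl fun u hu => (h1 u hu).symm)
      _ = ∑ u ∈ U, ∑ v ∈ C, (if G.Adj u v then 1 else 0) := by
          refine Finset.sum_congr rfl fun u _ => ?_
          rw [Finset.card_filter]
      _ = ∑ v ∈ C, ∑ u ∈ U, (if G.Adj u v then 1 else 0) := Finset.sum_comm
      _ = ∑ v ∈ C, (U.filter (fun u => G.Adj u v)).card := by
          refine Finset.sum_congr rfl fun v _ => ?_
          rw [Finset.card_filter]
      _ ≤ ∑ v ∈ C, 2 := Finset.sum_le_sum h2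
      _ = 2 * C.card := by rw [Finset.sum_const, smul_eq_mul, mul_comm]
  -- |C| ≤ 2 |M|
  have hCcard : C.card ≤ 2 * M.card := by
    have hsub : C ⊆ M.biUnion (fun e => Finset.univ.filter (· ∈ e)) := by
      intro v hv
      obtain ⟨e, heM, hve⟩ := (hmemC v).1 hv
      exact Finset.mem_biUnion.2 ⟨e, heM, by simp [hve]⟩
    calc C.card ≤ (M.biUnion (fun e => Finset.univ.filter (· ∈ e))).card :=
          Finset.card_le_card hsub
      _ ≤ ∑ e ∈ M, (Finset.univ.filter (· ∈ e)).card := Finset.card_biUnion_le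
      _ ≤ ∑ e ∈ M, 2 := by
          refine Finset.sum_le_sum fun e _ => ?_
          induction e using Sym2.ind with
          | _ a b =>
            have : Finset.univ.filter (· ∈ s(a, b)) ⊆ {a, b} := by
              intro x hx
              simp only [Finset.mem_filter, Sym2.mem_iff] at hx
              simp [hx.2]
            exact (Finset.card_le_card this).trans ((Finset.card_insert_le _ _).trans (by simp))
      _ = 2 * M.card := by rw [Finset.sum_const, smul_eq_mul, mul_comm]
  have hn : Fintype.card V = U.card + C.card := by
    rw [hU, Finset.card_compl]
    have := Finset.card_le_univ C
    omega
  have hfinal : 3 * Fintype.card V ≤ 10 * M.card := by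
    have h3 : 3 * U.card ≤ 4 * M.card := hcount.trans (by omega)
    omega
  rw [div_le_iff₀ (by norm_num)]
  have : (3 * Fintype.card V : ℚ) ≤ 10 * M.card := by exact_mod_cast hfinal
  linarith
end

section
/- Let G be a connected graph with a bridge e = u₀u₁, and let G₀, G₁ be the two components of G − e with u_i ∈ G_i. If M₀ is a maximal matching of the subgraph induced by V(G₀) ∪ {u₁} that avoids the edge u₀u₁, and M₁ is a maximal matching of G₁, then M₀ ∪ M₁ is a maximal matching of G. -/
open SimpleGraph Finset
open scoped Classical

/-- `M` is a matching of the subgraph of `G` induced by the vertex set `S`. -/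
def IsMatchingIn {V : Type} (G : SimpleGraph V) (S : Set V) (M : Finset (Sym2 V)) : Prop :=
  (∀ e ∈ M, e ∈ G.edgeSet ∧ ∀ v ∈ e, v ∈ S) ∧
    ∀ e ∈ M, ∀ f ∈ M, e ≠ f → ∀ v : V, v ∈ e → v ∉ f

/-- `M` is a maximal matching of the subgraph of `G` induced by the vertex set `S`. -/
def IsMaximalMatchingIn {V : Type} (G : SimpleGraph V) (S : Set V)
    (M : Finset (Sym2 V)) : Prop :=
  IsMatchingIn G S M ∧
    ∀ e ∈ G.edgeSet, (∀ v ∈ e, v ∈ S) → e ∉ M → ¬ IsMatchingIn G S (insert e M)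

/-
Deleting the bridge `u₀u₁` splits the vertices into the classes `G₀` and `G₁` of `u₀` and `u₁`,
and every other edge lies inside one class. An edge of `M₀` cannot meet `u₁`: its other end
would lie in `G₀`, so it would be the bridge. Hence `M₀` lives in `G₀` and `M₁` in `G₁`, and
their union is a matching. An edge extending it lies inside `V(G₀) ∪ {u₁}` (the bridge
included) or inside `G₁`, so it would extend `M₀` or `M₁`.
-/

section Matching

variable {V : Type} {G : SimpleGraph V} {S T : Set V} {M M₀ M₁ N : Finset (Sym2 V)}
  {e : Sym2 V}

lemma IsMatchingSet.isMatchingIn_of_subset (hN : IsMatchingSet G N) (hMN : M ⊆ N)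
    (hS : ∀ f ∈ M, ∀ v ∈ f, v ∈ S) : IsMatchingIn G S M :=
  ⟨fun f hf => ⟨hN.1 f (hMN hf), hS f hf⟩,
    fun f hf g hg => hN.2 f (hMN hf) g (hMN hg)⟩

lemma IsMatchingIn.isMatchingSet_union (h₀ : IsMatchingIn G S M₀) (h₁ : IsMatchingIn G T M₁)
    (hdisj : ∀ f ∈ M₀, ∀ g ∈ M₁, ∀ v ∈ f, v ∉ g) : IsMatchingSet G (M₀ ∪ M₁) := by
  refine ⟨fun f hf => ?_, fun f hf g hg hfg v hvf hvg => ?_⟩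
  · rcases Finset.mem_union.mp hf with hf | hf
    exacts [(h₀.1 f hf).1, (h₁.1 f hf).1]
  · rcases Finset.mem_union.mp hf with hf | hf <;> rcases Finset.mem_union.mp hg with hg | hg
    · exact h₀.2 f hf g hg hfg v hvf hvg
    · exact hdisj f hf g hg v hvf hvg
    · exact hdisj g hg f hf v hvg hvf
    · exact h₁.2 f hf g hg hfg v hvf hvg

lemma IsMaximalMatchingIn.not_isMatchingSet_insert (h : IsMaximalMatchingIn G S M)
    (he : e ∈ G.edgeSet) (heS : ∀ v ∈ e, v ∈ S) (heM : e ∉ M) (hMN : M ⊆ N) :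
    ¬ IsMatchingSet G (insert e N) := fun hN =>
  h.2 e he heS heM <| hN.isMatchingIn_of_subset (Finset.insert_subset_insert e hMN) <| by
    simpa only [Finset.forall_mem_insert] using ⟨heS, fun f hf => (h.1.1 f hf).2⟩

lemma IsMaximalMatchingIn.union (h₀ : IsMaximalMatchingIn G S M₀)
    (h₁ : IsMaximalMatchingIn G T M₁) (hdisj : ∀ f ∈ M₀, ∀ g ∈ M₁, ∀ v ∈ f, v ∉ g)
    (hcover : ∀ f ∈ G.edgeSet, (∀ v ∈ f, v ∈ S) ∨ (∀ v ∈ f, v ∈ T)) :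
    IsMaximalMatching G (M₀ ∪ M₁) := by
  refine ⟨h₀.1.isMatchingSet_union h₁.1 hdisj, fun f hf hfM => ?_⟩
  rcases hcover f hf with hfS | hfT
  · exact h₀.not_isMatchingSet_insert hf hfS (fun h => hfM (Finset.mem_union_left _ h))
      Finset.subset_union_left
  · exact h₁.not_isMatchingSet_insert hf hfT (fun h => hfM (Finset.mem_union_right _ h))
      Finset.subset_union_right

end Matching

namespace SimpleGraph

variable {V : Type*} {G : SimpleGraph V} {x y v : V} {e : Sym2 V}

lemma Reachable.deleteEdges_or (h : G.Reachable x v) :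
    (G.deleteEdges {s(x, y)}).Reachable x v ∨ (G.deleteEdges {s(x, y)}).Reachable y v := by
  rw [reachable_iff_reflTransGen] at h
  induction h with
  | refl => exact Or.inl .rfl
  | @tail b c _ hbc ih =>
    by_cases hbr : s(b, c) = s(x, y)
    · rcases Sym2.eq_iff.mp hbr with ⟨-, rfl⟩ | ⟨-, rfl⟩
      exacts [Or.inr .rfl, Or.inl .rfl]
    · have hbc' : (G.deleteEdges {s(x, y)}).Adj b c :=
        (deleteEdges_adj ..).mpr ⟨hbc, by simpa using hbr⟩
      exact ih.imp (·.trans hbc'.reachable) (·.trans hbc'.reachable)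

lemma Connected.forall_mem_reachable_deleteEdges_or (hG : G.Connected) (he : e ∈ G.edgeSet)
    (hne : e ≠ s(x, y)) :
    (∀ v ∈ e, (G.deleteEdges {s(x, y)}).Reachable x v) ∨
      ∀ v ∈ e, (G.deleteEdges {s(x, y)}).Reachable y v := by
  induction e using Sym2.ind with
  | _ a b =>
    have hab : (G.deleteEdges {s(x, y)}).Adj a b :=
      (deleteEdges_adj ..).mpr ⟨he, by simpa using hne⟩
    simp only [Sym2.mem_iff, forall_eq_or_imp, forall_eq]
    exact ((hG.preconnected x a).deleteEdges_or).imp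
      (fun h => ⟨h, h.trans hab.reachable⟩) (fun h => ⟨h, h.trans hab.reachable⟩)

lemma IsBridge.forall_mem_reachable_of_forall_mem_reachable_or_eq (hG : G.Connected)
    (hb : G.IsBridge s(x, y)) (he : e ∈ G.edgeSet) (hne : e ≠ s(x, y))
    (heS : ∀ v ∈ e, (G.deleteEdges {s(x, y)}).Reachable x v ∨ v = y) :
    ∀ v ∈ e, (G.deleteEdges {s(x, y)}).Reachable x v := by
  refine (hG.forall_mem_reachable_deleteEdges_or he hne).resolve_right fun hy => ?_
  have hy_of_mem : ∀ v ∈ e, v = y := fun v hv =>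
    (heS v hv).resolve_left fun hx => isBridge_iff.mp hb (hx.trans (hy v hv).symm)
  induction e using Sym2.ind with
  | _ a b =>
    exact G.not_isDiag_of_mem_edgeSet he <| Sym2.mk_isDiag_iff.mpr <|
      (hy_of_mem a (Sym2.mem_mk_left a b)).trans (hy_of_mem b (Sym2.mem_mk_right a b)).symm

end SimpleGraph

theorem stmt_19_general {V : Type} (G : SimpleGraph V)
    (hconn : G.Connected) (u₀ u₁ : V)
    (hbridge : G.IsBridge s(u₀, u₁))
    (M₀ M₁ : Finset (Sym2 V))
    (hM₀ : IsMaximalMatchingIn G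
      ({v | (G.deleteEdges {s(u₀, u₁)}).Reachable u₀ v} ∪ {u₁}) M₀)
    (havoid : s(u₀, u₁) ∉ M₀)
    (hM₁ : IsMaximalMatchingIn G {v | (G.deleteEdges {s(u₀, u₁)}).Reachable u₁ v} M₁) :
    IsMaximalMatching G (M₀ ∪ M₁) := by
  have hM₀_reach : ∀ f ∈ M₀, ∀ v ∈ f, (G.deleteEdges {s(u₀, u₁)}).Reachable u₀ v :=
    fun f hf => hbridge.forall_mem_reachable_of_forall_mem_reachable_or_eq hconn
      (hM₀.1.1 f hf).1 (fun h => havoid (h ▸ hf)) (hM₀.1.1 f hf).2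
  refine hM₀.union hM₁ (fun f hf g hg v hvf hvg => ?_) (fun f hf => ?_)
  · exact isBridge_iff.mp hbridge ((hM₀_reach f hf v hvf).trans ((hM₁.1.1 g hg).2 v hvg).symm)
  · by_cases hbr : f = s(u₀, u₁)
    · subst hbr
      left
      simp [Reachable.rfl]
    · exact (hconn.forall_mem_reachable_deleteEdges_or hf hbr).imp
        (fun h v hv => Or.inl (h v hv)) id

/-- Gluing maximal matchings across a bridge `u₀u₁`: a maximal matching `M₀` of the
subgraph induced by `V(G₀) ∪ {u₁}` avoiding `u₀u₁`, together with a maximal matching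
`M₁` of `G₁`, forms a maximal matching of `G`. Here `G₀, G₁` are the components of
`G - u₀u₁` containing `u₀` and `u₁` respectively. -/
theorem stmt_19 {V : Type} [Fintype V] (G : SimpleGraph V)
    (hconn : G.Connected) (u₀ u₁ : V)
    (hbridge : G.IsBridge s(u₀, u₁))
    (M₀ M₁ : Finset (Sym2 V))
    (hM₀ : IsMaximalMatchingIn G
      ({v | (G.deleteEdges {s(u₀, u₁)}).Reachable u₀ v} ∪ {u₁}) M₀)
    (havoid : s(u₀, u₁) ∉ M₀)
    (hM₁ : IsMaximalMatchingIn G {v | (G.deleteEdges {s(u₀, u₁)}).Reachable u₁ v} M₁) :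
    IsMaximalMatching G (M₀ ∪ M₁) :=
  stmt_19_general G hconn u₀ u₁ hbridge M₀ M₁ hM₀ havoid hM₁
end
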